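/- arXiv:2110.14457 — 2 statements merged into one kernel-verified Lean document; each statement's English description precedes it below -/
import Mathlib

section
/- With N = 3 skills and M = 2 states and uniform skill prior, the maximal mutual information Ī*(3,2) over all assignment matrices p ∈ ℝ^{3×2} with nonnegative rows summing to 1 is log 3 − (2/3) log 2, which is strictly less than Ī*(2,2) = log 2. Hence removing a skill can strictly increase the uniform-prior optimal mutual information. -/
/-!
Writing `tₙ = p n 0` and `s = t₀ + t₁ + t₂`, the quantity `3 (Ī(3,2) - log 3)` equals
`H(s) - Σₙ h(tₙ)`, where `h` is the binary entropy and `H(s) = -s log s - (3 - s) log (3 - s)`.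
Concavity of `h` gives the chord bound `h(t) ≥ 2 log 2 · min(t, 1 - t)`, and comparing `H` with
its tangent lines at `s = 2` and `s = 1` gives `H(s) ≤ -log 2 · max(s, 3 - s)`. Rounding each
`tₙ` to `0` or `1` shows `max(s, 3 - s) + Σₙ min(tₙ, 1 - tₙ) ≥ 2`, whence
`H(s) - Σₙ h(tₙ) ≤ -2 log 2`.
Equality holds for the assignment sending two skills to one state and the third to the other.
-/

/-- Uniform-prior mutual information of a stochastic skill-to-state assignment. -/
noncomputable def uniformPriorMI (N M : ℕ) (p : Fin N → Fin M → ℝ) : ℝ :=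
  Real.log N + (1 / N : ℝ) * ∑ n, ∑ m, p n m * Real.log (p n m / ∑ n', p n' m)

open Real Finset

lemma sum_mul_log_div_sum {ι : Type*} (s : Finset ι) {f : ι → ℝ}
    (hf : ∀ i ∈ s, 0 ≤ f i) :
    ∑ i ∈ s, f i * log (f i / ∑ j ∈ s, f j) =
      negMulLog (∑ i ∈ s, f i) - ∑ i ∈ s, negMulLog (f i) := by
  set S := ∑ j ∈ s, f j
  rcases eq_or_ne S 0 with hS | hS
  · have hzero : ∀ i ∈ s, f i = 0 := (sum_eq_zero_iff_of_nonneg hf).1 hS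
    rw [hS, sum_eq_zero fun i hi => by simp [hzero i hi],
      sum_eq_zero fun i hi => by simp [hzero i hi], negMulLog_zero, sub_zero]
  · have hsplit : ∀ i ∈ s, f i * log (f i / S) = f i * log (f i) - f i * log S := by
      intro i _
      rcases eq_or_ne (f i) 0 with h | h
      · simp [h]
      · rw [log_div h hS]; ring
    rw [sum_congr rfl hsplit, sum_sub_distrib, ← sum_mul]
    simp only [negMulLog, neg_mul, sum_neg_distrib]
    ring

lemma uniformPriorMI_eq_of_nonneg {N M : ℕ} {p : Fin N → Fin M → ℝ}
    (hp : ∀ n m, 0 ≤ p n m) :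
    uniformPriorMI N M p =
      log N + (∑ m, negMulLog (∑ n, p n m) - ∑ n, ∑ m, negMulLog (p n m)) / N := by
  rw [uniformPriorMI, sum_comm, sum_congr rfl fun m _ => sum_mul_log_div_sum univ fun n _ => hp n m,
    sum_sub_distrib, sum_comm (f := fun n m => negMulLog (p n m))]
  ring

lemma two_mul_log_two_mul_le_binEntropy {t : ℝ} (h0 : 0 ≤ t) (h1 : t ≤ 2⁻¹) :
    2 * log 2 * t ≤ binEntropy t := by
  have hchord := strictConcave_binEntropy.concaveOn.2
    (show (0 : ℝ) ∈ Set.Icc 0 1 by norm_num) (show (2⁻¹ : ℝ) ∈ Set.Icc 0 1 by norm_num)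
    (show 0 ≤ 1 - 2 * t by linarith) (show 0 ≤ 2 * t by linarith) (by ring)
  simp only [binEntropy_zero, binEntropy_two_inv, smul_eq_mul, mul_zero, zero_add] at hchord
  rw [show 2 * t * 2⁻¹ = t by ring] at hchord
  linarith

lemma two_mul_log_two_mul_min_le_binEntropy {t : ℝ} (h0 : 0 ≤ t) (h1 : t ≤ 1) :
    2 * log 2 * min t (1 - t) ≤ binEntropy t := by
  rcases le_total t 2⁻¹ with h | h
  · rw [min_eq_left (by linarith)]
    exact two_mul_log_two_mul_le_binEntropy h0 h
  · rw [min_eq_right (by linarith), ← binEntropy_one_sub]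
    exact two_mul_log_two_mul_le_binEntropy (by linarith) (by linarith)

lemma negMulLog_add_negMulLog_three_sub_le {s : ℝ} (h0 : 0 ≤ s) (h3 : s ≤ 3) :
    negMulLog s + negMulLog (3 - s) ≤ -(log 2 * s) := by
  have hscale : negMulLog s = s / 2 * negMulLog 2 + 2 * negMulLog (s / 2) := by
    rw [← negMulLog_mul]; ring_nf
  have htwo : negMulLog 2 = -(2 * log 2) := by simp [negMulLog]
  have hs := negMulLog_le_one_sub_self (x := s / 2) (by positivity)
  have hs' := negMulLog_le_one_sub_self (x := 3 - s) (by linarith)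
  rw [hscale, htwo]
  linarith

lemma negMulLog_add_negMulLog_three_sub_le_max {s : ℝ} (h0 : 0 ≤ s) (h3 : s ≤ 3) :
    negMulLog s + negMulLog (3 - s) ≤ -(log 2 * max s (3 - s)) := by
  rcases le_total s (3 - s) with h | h
  · rw [max_eq_right h, add_comm]
    simpa using negMulLog_add_negMulLog_three_sub_le (s := 3 - s) (by linarith) (by linarith)
  · rw [max_eq_left h]
    exact negMulLog_add_negMulLog_three_sub_le h0 h3

lemma two_le_max_add_sum_min {t : Fin 3 → ℝ} (h0 : ∀ n, 0 ≤ t n) (h1 : ∀ n, t n ≤ 1) :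
    2 ≤ max (∑ n, t n) (3 - ∑ n, t n) + ∑ n, min (t n) (1 - t n) := by
  simp only [Fin.sum_univ_three]
  have := h0 0; have := h0 1; have := h0 2; have := h1 0; have := h1 1; have := h1 2
  rcases min_cases (t 0) (1 - t 0) with ⟨e0, _⟩ | ⟨e0, _⟩ <;>
    rcases min_cases (t 1) (1 - t 1) with ⟨e1, _⟩ | ⟨e1, _⟩ <;>
    rcases min_cases (t 2) (1 - t 2) with ⟨e2, _⟩ | ⟨e2, _⟩ <;>
    rw [e0, e1, e2] <;>
    linarith [le_max_left (t 0 + t 1 + t 2) (3 - (t 0 + t 1 + t 2)),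
      le_max_right (t 0 + t 1 + t 2) (3 - (t 0 + t 1 + t 2))]

lemma uniformPriorMI_three_two_le {p : Fin 3 → Fin 2 → ℝ} (hp : ∀ n m, 0 ≤ p n m)
    (hrow : ∀ n, ∑ m, p n m = 1) :
    uniformPriorMI 3 2 p ≤ log 3 - 2 / 3 * log 2 := by
  set t : Fin 3 → ℝ := fun n => p n 0
  have hp1 : ∀ n, p n 1 = 1 - t n := fun n => by
    have := hrow n
    rw [Fin.sum_univ_two] at this
    linarith
  have ht0 : ∀ n, 0 ≤ t n := fun n => hp n 0
  have ht1 : ∀ n, t n ≤ 1 := fun n => by linarith [hp n 1, hp1 n]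
  have hrowH : ∀ n, ∑ m, negMulLog (p n m) = binEntropy (t n) := fun n => by
    rw [Fin.sum_univ_two, hp1, binEntropy_eq_negMulLog_add_negMulLog_one_sub]
  have hcol :
      ∑ m, negMulLog (∑ n, p n m) = negMulLog (∑ n, t n) + negMulLog (3 - ∑ n, t n) := by
    simp only [Fin.sum_univ_two, hp1, sum_sub_distrib, sum_const, card_univ, Fintype.card_fin]
    norm_num
    rfl
  have hs0 : 0 ≤ ∑ n, t n := sum_nonneg fun n _ => ht0 n
  have hs3 : ∑ n, t n ≤ 3 := by simpa using sum_le_sum fun n (_ : n ∈ univ) => ht1 n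
  have hmin : 0 ≤ ∑ n, min (t n) (1 - t n) :=
    sum_nonneg fun n _ => le_min (ht0 n) (by linarith [ht1 n])
  have hentropy : 2 * log 2 * ∑ n, min (t n) (1 - t n) ≤ ∑ n, binEntropy (t n) := by
    rw [mul_sum]
    exact sum_le_sum fun n _ => two_mul_log_two_mul_min_le_binEntropy (ht0 n) (ht1 n)
  have hcolumns := negMulLog_add_negMulLog_three_sub_le_max hs0 hs3
  have hlog2 : 0 ≤ log 2 := log_nonneg one_le_two
  have hcount := mul_le_mul_of_nonneg_left (two_le_max_add_sum_min ht0 ht1) hlog2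
  rw [uniformPriorMI_eq_of_nonneg hp, hcol, sum_congr rfl fun n _ => hrowH n]
  push_cast
  linarith [mul_nonneg hlog2 hmin]

lemma exists_uniformPriorMI_three_two_eq :
    ∃ p : Fin 3 → Fin 2 → ℝ, (∀ n m, 0 ≤ p n m) ∧ (∀ n, ∑ m, p n m = 1) ∧
      uniformPriorMI 3 2 p = log 3 - 2 / 3 * log 2 := by
  have hp : ∀ n m, (0 : ℝ) ≤ ![![1, 0], ![1, 0], ![0, 1]] n m := fun n m => by
    fin_cases n <;> fin_cases m <;> norm_num
  refine ⟨_, hp, fun n => by fin_cases n <;> simp, ?_⟩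
  rw [uniformPriorMI_eq_of_nonneg hp]
  simp [Fin.sum_univ_three, negMulLog]
  norm_num
  ring

lemma log_three_sub_two_div_three_mul_log_two_lt_log_two :
    log 3 - 2 / 3 * log 2 < log 2 := by
  have h := log_lt_log (by norm_num) (show (3 : ℝ) ^ 3 < 2 ^ 5 by norm_num)
  rw [log_pow, log_pow] at h
  push_cast at h
  linarith

/-- With `N = 3` skills and `M = 2` states under the uniform skill prior, the maximal
mutual information is `log 3 − (2/3) log 2`: every valid assignment is bounded by it,
some valid assignment attains it, and it is strictly smaller than `Ī*(2,2) = log 2`.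
Hence removing a skill can strictly increase the uniform-prior optimal MI. -/
theorem uniformPriorMI_three_two_lt_two_two :
    (∀ p : Fin 3 → Fin 2 → ℝ, (∀ n m, 0 ≤ p n m) → (∀ n, ∑ m, p n m = 1) →
      uniformPriorMI 3 2 p ≤ Real.log 3 - (2 / 3) * Real.log 2)
    ∧ (∃ p : Fin 3 → Fin 2 → ℝ, (∀ n m, 0 ≤ p n m) ∧ (∀ n, ∑ m, p n m = 1) ∧
        uniformPriorMI 3 2 p = Real.log 3 - (2 / 3) * Real.log 2)
    ∧ Real.log 3 - (2 / 3) * Real.log 2 < Real.log 2 := by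
  exact ⟨fun _ hp hrow => uniformPriorMI_three_two_le hp hrow, exists_uniformPriorMI_three_two_eq,
    log_three_sub_two_div_three_mul_log_two_lt_log_two⟩
end

section
/- In the N-skill / M-state uniform-prior model with M = 2 and N = 3, any row-stochastic p attains Ī(3,2) ≤ log 3 − (2/3) log 2, and this bound is attained by assigning two skills deterministically to one state and the third skill deterministically to the other state. -/
/-- Tangent-line bound for `x log x`: for `t > 0`, `x ≥ 0`,
`x log t + x - t ≤ x log x`. -/
lemma mul_log_tangent {t x : ℝ} (ht : 0 < t) (hx : 0 ≤ x) :
    x * Real.log t + x - t ≤ x * Real.log x := by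
  rcases eq_or_lt_of_le hx with h | h
  · simp [← h]; linarith
  · have h1 : Real.log (t / x) ≤ t / x - 1 := Real.log_le_sub_one_of_pos (by positivity)
    have h2 : Real.log (t / x) = Real.log t - Real.log x :=
      Real.log_div (ne_of_gt ht) (ne_of_gt h)
    rw [h2] at h1
    have h3 : (Real.log t - Real.log x) * x ≤ (t / x - 1) * x :=
      mul_le_mul_of_nonneg_right h1 hx
    have h4 : (t / x - 1) * x = t - x := by field_simp
    linarith

/-- Binary-entropy lower bound for small arguments. -/
lemma ent_ge_small {x : ℝ} (h0 : 0 ≤ x) (hh : x ≤ 1 / 2) :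
    x * Real.log 2 ≤ -(x * Real.log x) - (1 - x) * Real.log (1 - x) := by
  have h2 : (1 - x) * Real.log (1 - x) ≤ 0 := by
    rcases eq_or_lt_of_le (show (0:ℝ) ≤ 1 - x by linarith) with h | h
    · simp [← h]
    · exact mul_nonpos_of_nonneg_of_nonpos (le_of_lt h)
        (Real.log_nonpos (le_of_lt h) (by linarith))
  have h1 : x * Real.log 2 ≤ -(x * Real.log x) := by
    rcases eq_or_lt_of_le h0 with h | h
    · simp [← h]
    · have hx2 : Real.log (2 * x) ≤ 0 := Real.log_nonpos (by linarith) (by linarith)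
      have : Real.log (2 * x) = Real.log 2 + Real.log x :=
        Real.log_mul (by norm_num) (ne_of_gt h)
      have hl : Real.log 2 + Real.log x ≤ 0 := by rw [← this]; exact hx2
      nlinarith
  linarith

/-- Binary-entropy lower bound for large arguments. -/
lemma ent_ge_big {x : ℝ} (h1 : 1 / 2 ≤ x) (hx : x ≤ 1) :
    (1 - x) * Real.log 2 ≤ -(x * Real.log x) - (1 - x) * Real.log (1 - x) := by
  have := ent_ge_small (show (0:ℝ) ≤ 1 - x by linarith) (by linarith : (1:ℝ) - x ≤ 1 / 2)
  have h' : (1 : ℝ) - (1 - x) = x := by ring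
  rw [h'] at this
  linarith

/-- The key inequality: for `a,b,c ∈ [0,1]`,
`h(a)+h(b)+h(c) + g(a+b+c) ≥ 2 log 2`. -/
lemma key {a b c : ℝ} (ha0 : 0 ≤ a) (ha1 : a ≤ 1) (hb0 : 0 ≤ b) (hb1 : b ≤ 1)
    (hc0 : 0 ≤ c) (hc1 : c ≤ 1) :
    2 * Real.log 2 ≤
      (-(a * Real.log a) - (1 - a) * Real.log (1 - a))
      + (-(b * Real.log b) - (1 - b) * Real.log (1 - b))
      + (-(c * Real.log c) - (1 - c) * Real.log (1 - c))
      + ((a + b + c) * Real.log (a + b + c)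
          + (3 - (a + b + c)) * Real.log (3 - (a + b + c))) := by
  have hs0 : (0:ℝ) ≤ a + b + c := by positivity
  have hs3 : (0:ℝ) ≤ 3 - (a + b + c) := by linarith
  have hlog2 : 0 ≤ Real.log 2 := Real.log_nonneg (by norm_num)
  have pa : 0 ≤ a * Real.log 2 := mul_nonneg ha0 hlog2
  have pb : 0 ≤ b * Real.log 2 := mul_nonneg hb0 hlog2
  have pc : 0 ≤ c * Real.log 2 := mul_nonneg hc0 hlog2
  have pa' : 0 ≤ (1 - a) * Real.log 2 := mul_nonneg (by linarith) hlog2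
  have pb' : 0 ≤ (1 - b) * Real.log 2 := mul_nonneg (by linarith) hlog2
  have pc' : 0 ≤ (1 - c) * Real.log 2 := mul_nonneg (by linarith) hlog2
  -- tangent bound at s = 1 : g s ≥ 2 log 2 - (s-1) log 2
  have t1 : 2 * Real.log 2 - (a + b + c - 1) * Real.log 2
      ≤ (a + b + c) * Real.log (a + b + c)
        + (3 - (a + b + c)) * Real.log (3 - (a + b + c)) := by
    have u1 : (a + b + c) * Real.log 1 + (a + b + c) - 1
        ≤ (a + b + c) * Real.log (a + b + c) := mul_log_tangent one_pos hs0
    have u2 : (3 - (a + b + c)) * Real.log 2 + (3 - (a + b + c)) - 2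
        ≤ (3 - (a + b + c)) * Real.log (3 - (a + b + c)) := mul_log_tangent two_pos hs3
    rw [Real.log_one] at u1
    linarith
  -- tangent bound at s = 2 : g s ≥ 2 log 2 - (2-s) log 2
  have t2 : 2 * Real.log 2 - (2 - (a + b + c)) * Real.log 2
      ≤ (a + b + c) * Real.log (a + b + c)
        + (3 - (a + b + c)) * Real.log (3 - (a + b + c)) := by
    have u1 : (a + b + c) * Real.log 2 + (a + b + c) - 2
        ≤ (a + b + c) * Real.log (a + b + c) := mul_log_tangent two_pos hs0
    have u2 : (3 - (a + b + c)) * Real.log 1 + (3 - (a + b + c)) - 1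
        ≤ (3 - (a + b + c)) * Real.log (3 - (a + b + c)) := mul_log_tangent one_pos hs3
    rw [Real.log_one] at u2
    linarith
  rcases le_or_gt a (1 / 2) with hA | hA <;> rcases le_or_gt b (1 / 2) with hB | hB <;>
    rcases le_or_gt c (1 / 2) with hC | hC
  · have e1 := ent_ge_small ha0 hA
    have e2 := ent_ge_small hb0 hB
    have e3 := ent_ge_small hc0 hC
    linarith [t1]
  · have e1 := ent_ge_small ha0 hA
    have e2 := ent_ge_small hb0 hB
    have e3 := ent_ge_big (le_of_lt hC) hc1
    linarith [t1]
  · have e1 := ent_ge_small ha0 hA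
    have e2 := ent_ge_big (le_of_lt hB) hb1
    have e3 := ent_ge_small hc0 hC
    linarith [t1]
  · have e1 := ent_ge_small ha0 hA
    have e2 := ent_ge_big (le_of_lt hB) hb1
    have e3 := ent_ge_big (le_of_lt hC) hc1
    linarith [t2]
  · have e1 := ent_ge_big (le_of_lt hA) ha1
    have e2 := ent_ge_small hb0 hB
    have e3 := ent_ge_small hc0 hC
    linarith [t1]
  · have e1 := ent_ge_big (le_of_lt hA) ha1
    have e2 := ent_ge_small hb0 hB
    have e3 := ent_ge_big (le_of_lt hC) hc1
    linarith [t2]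
  · have e1 := ent_ge_big (le_of_lt hA) ha1
    have e2 := ent_ge_big (le_of_lt hB) hb1
    have e3 := ent_ge_small hc0 hC
    linarith [t2]
  · have e1 := ent_ge_big (le_of_lt hA) ha1
    have e2 := ent_ge_big (le_of_lt hB) hb1
    have e3 := ent_ge_big (le_of_lt hC) hc1
    linarith [t2]

/-- Expand `x * log (x / t)` when `0 ≤ x ≤ t`. -/
lemma mul_log_div_eq {x t : ℝ} (hx : 0 ≤ x) (hxt : x ≤ t) :
    x * Real.log (x / t) = x * Real.log x - x * Real.log t := by
  rcases eq_or_lt_of_le hx with h | h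
  · simp [← h]
  · have ht : 0 < t := lt_of_lt_of_le h hxt
    rw [Real.log_div (ne_of_gt h) (ne_of_gt ht)]
    ring

/-- In the `N = 3` skill / `M = 2` state uniform-prior model, every row-stochastic
assignment satisfies `Ī(3,2) ≤ log 3 − (2/3) log 2`, and the bound is attained by
assigning two skills deterministically to one state and the third skill
deterministically to the other state. -/
theorem uniformPriorMI_three_two_attained :
    (∀ p : Fin 3 → Fin 2 → ℝ, (∀ n m, 0 ≤ p n m) → (∀ n, ∑ m, p n m = 1) →
      uniformPriorMI 3 2 p ≤ Real.log 3 - (2 / 3) * Real.log 2)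
    ∧ uniformPriorMI 3 2
        (fun n m => if n.val ≤ 1 then (if m.val = 0 then 1 else 0)
                    else (if m.val = 1 then 1 else 0))
      = Real.log 3 - (2 / 3) * Real.log 2 := by
  constructor
  · intro p hpos hrow
    have h0 := hrow 0
    have h1 := hrow 1
    have h2 := hrow 2
    simp [Fin.sum_univ_two] at h0 h1 h2
    set a := p 0 0 with ha
    set b := p 1 0 with hb
    set c := p 2 0 with hc
    have ha0 : 0 ≤ a := hpos 0 0
    have hb0 : 0 ≤ b := hpos 1 0
    have hc0 : 0 ≤ c := hpos 2 0
    have ha1 : a ≤ 1 := by have := hpos 0 1; linarith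
    have hb1 : b ≤ 1 := by have := hpos 1 1; linarith
    have hc1 : c ≤ 1 := by have := hpos 2 1; linarith
    have ea : p 0 1 = 1 - a := by linarith
    have eb : p 1 1 = 1 - b := by linarith
    have ec : p 2 1 = 1 - c := by linarith
    rw [uniformPriorMI]
    simp only [Fin.sum_univ_three, Fin.sum_univ_two, ea, eb, ec]
    rw [mul_log_div_eq ha0 (by linarith : a ≤ a + b + c),
        mul_log_div_eq hb0 (by linarith : b ≤ a + b + c),
        mul_log_div_eq hc0 (by linarith : c ≤ a + b + c),
        mul_log_div_eq (by linarith : (0:ℝ) ≤ 1 - a)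
          (by linarith : 1 - a ≤ 1 - a + (1 - b) + (1 - c)),
        mul_log_div_eq (by linarith : (0:ℝ) ≤ 1 - b)
          (by linarith : 1 - b ≤ 1 - a + (1 - b) + (1 - c)),
        mul_log_div_eq (by linarith : (0:ℝ) ≤ 1 - c)
          (by linarith : 1 - c ≤ 1 - a + (1 - b) + (1 - c))]
    have hkey := key ha0 ha1 hb0 hb1 hc0 hc1
    have h3s : (1 - a + (1 - b) + (1 - c)) = 3 - (a + b + c) := by ring
    rw [h3s]
    have hN : ((3 : ℕ) : ℝ) = 3 := by norm_num
    rw [hN]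
    nlinarith [hkey]
  · rw [uniformPriorMI]
    simp only [Fin.sum_univ_three, Fin.sum_univ_two]
    norm_num
    have hl : Real.log (1 / 2) = -Real.log 2 := by
      rw [Real.log_div one_ne_zero two_ne_zero, Real.log_one]; ring
    rw [hl]; ring
end
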